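/- arXiv:2304.08736 — 5 statements merged into one kernel-verified Lean document; each statement's English description precedes it below -/
import Mathlib

section
/- The cardinality of the set {⌊x/n⌋ : 1 ≤ n ≤ x} equals ⌊√(4x+1)⌋ - 1 for every positive integer x. -/
lemma sqrt_aux (x s : ℕ) (hsx : s * s ≤ x) (hxs : x < (s + 1) * (s + 1)) (hs1 : 1 ≤ s) :
    Nat.sqrt (4 * x + 1) = s + x / (s + 1) + 1 := by
  rcases le_or_gt (s * (s + 1)) x with h | h
  · have hq : x / (s + 1) = s := by
      have hu : x / (s + 1) < s + 1 := (Nat.div_lt_iff_lt_mul (by omega)).mpr hxs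
      have hl : s ≤ x / (s + 1) := (Nat.le_div_iff_mul_le (by omega)).mpr (by nlinarith)
      omega
    rw [hq]
    refine le_antisymm ?_ ?_
    · have := Nat.sqrt_lt.mpr (show 4 * x + 1 < (s + s + 2) * (s + s + 2) by nlinarith)
      omega
    · exact Nat.le_sqrt.mpr (show (s + s + 1) * (s + s + 1) ≤ 4 * x + 1 by nlinarith)
  · have hq : x / (s + 1) = s - 1 := by
      have h1 : x / (s + 1) < s := (Nat.div_lt_iff_lt_mul (by omega)).mpr (by nlinarith)
      have h2 : s - 1 ≤ x / (s + 1) := (Nat.le_div_iff_mul_le (by omega)).mpr (by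
        rcases Nat.exists_eq_add_of_le hs1 with ⟨k, hk⟩
        have hk1 : s - 1 = k := by omega
        rw [hk1, hk]
        nlinarith)
      omega
    rw [hq]
    have hss1 : s + (s - 1) + 1 = 2 * s := by omega
    rw [hss1]
    refine le_antisymm ?_ ?_
    · have := Nat.sqrt_lt.mpr (show 4 * x + 1 < (2 * s + 1) * (2 * s + 1) by nlinarith)
      omega
    · exact Nat.le_sqrt.mpr (show (2 * s) * (2 * s) ≤ 4 * x + 1 by nlinarith)

theorem stmt_0 (x : ℕ) (hx : 0 < x) :
    ((Finset.Icc 1 x).image (fun n => x / n)).card = Nat.sqrt (4 * x + 1) - 1 := by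
  obtain ⟨s, hs⟩ : ∃ s, Nat.sqrt x = s := ⟨_, rfl⟩
  have hsx : s * s ≤ x := hs ▸ Nat.sqrt_le x
  have hxs : x < (s + 1) * (s + 1) := hs ▸ Nat.lt_succ_sqrt x
  have hs1 : 1 ≤ s := hs ▸ Nat.sqrt_pos.mpr hx
  have hsle : s ≤ x := hs ▸ Nat.sqrt_le_self x
  -- key strict inequality
  have key : ∀ n : ℕ, 0 < n → n * (n + 1) ≤ x → x / (n + 1) < x / n := by
    intro n hn h
    have hq : n ≤ x / (n + 1) := (Nat.le_div_iff_mul_le (by omega)).mpr (by nlinarith)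
    have h1 : x / (n + 1) * (n + 1) ≤ x := Nat.div_mul_le_self _ _
    have h2 : (x / (n + 1) + 1) * n ≤ x := by nlinarith
    have h3 := (Nat.le_div_iff_mul_le hn).mpr h2
    omega
  have anti : ∀ m n : ℕ, 0 < n → n < m → m ≤ s → x / m < x / n := by
    intro m n hn hnm hms
    have h1 : x / m ≤ x / (n + 1) := Nat.div_le_div_left (by omega) (by omega)
    have h2 : x / (n + 1) < x / n := key n hn (by nlinarith)
    omega
  have hss : x / (s + 1) < x / s := by
    rcases le_or_gt (s * (s + 1)) x with h | h
    · exact key s hs1 h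
    · have h1 : x / (s + 1) < s := (Nat.div_lt_iff_lt_mul (by omega)).mpr (by nlinarith)
      have h2 : s ≤ x / s := (Nat.le_div_iff_mul_le (by omega)).mpr hsx
      omega
  have hB : x / (s + 1) ≤ s := by
    have h2 : x / (s + 1) < s + 1 := (Nat.div_lt_iff_lt_mul (Nat.succ_pos s)).mpr hxs
    omega
  -- set equality
  have hset : (Finset.Icc 1 x).image (fun n => x / n)
      = (Finset.Icc 1 s).image (fun n => x / n) ∪ Finset.Icc 1 (x / (s + 1)) := by
    ext v
    simp only [Finset.mem_image, Finset.mem_union, Finset.mem_Icc]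
    constructor
    · rintro ⟨n, ⟨hn1, hn2⟩, rfl⟩
      rcases le_or_gt n s with h | h
      · exact Or.inl ⟨n, ⟨hn1, h⟩, rfl⟩
      · refine Or.inr ⟨Nat.one_le_div_iff (by omega) |>.mpr hn2,
          Nat.div_le_div_left (by omega) (by omega)⟩
    · rintro (⟨n, ⟨hn1, hn2⟩, rfl⟩ | ⟨hv1, hv2⟩)
      · exact ⟨n, ⟨hn1, le_trans hn2 hsle⟩, rfl⟩
      · have hvs : v ≤ s := le_trans hv2 hB
        have hvv : v * v ≤ x := by nlinarith
        have hvn : v ≤ x / v := (Nat.le_div_iff_mul_le (by omega)).mpr hvv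
        refine ⟨x / v, ⟨by omega, Nat.div_le_self _ _⟩, ?_⟩
        have hlo : v ≤ x / (x / v) :=
          (Nat.le_div_iff_mul_le (by omega)).mpr (by
            have := Nat.div_mul_le_self x v
            nlinarith [Nat.div_mul_le_self x v])
        have hup : x / (x / v) < v + 1 := by
          refine (Nat.div_lt_iff_lt_mul (by omega)).mpr ?_
          have h1 : x < (x / v + 1) * v := (Nat.div_lt_iff_lt_mul (by omega)).mp (Nat.lt_succ_self _)
          nlinarith
        omega
  rw [hset, Finset.card_union_of_disjoint, Finset.card_image_of_injOn, Nat.card_Icc,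
    Nat.card_Icc]
  · -- final arithmetic
    have hsq := sqrt_aux x s hsx hxs hs1
    rw [hsq]
    generalize x / (s + 1) = q
    omega
  · -- injOn
    intro a ha b hb hab
    simp only [Finset.coe_Icc, Set.mem_Icc] at ha hb
    have hab' : x / a = x / b := hab
    by_contra hne
    rcases lt_or_gt_of_ne hne with h | h
    · have := anti b a ha.1 h hb.2
      omega
    · have := anti a b hb.1 h ha.2
      omega
  · -- disjoint
    rw [Finset.disjoint_left]
    rintro v hv hv'
    simp only [Finset.mem_image, Finset.mem_Icc] at hv hv'
    obtain ⟨n, ⟨hn1, hn2⟩, rfl⟩ := hv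
    have h1 : x / s ≤ x / n := Nat.div_le_div_left hn2 hn1
    omega
end

section
/- For every real t > 1, the cardinality of the set {⌊x/n^t⌋ : 1 ≤ n ≤ x} equals x^(1/(t+1)) · (t^(-t/(t+1)) + t^(1/(t+1))) + O(1) as x → ∞. -/
/-!
By the mean value theorem, `x / n ^ t - x / (n + 1) ^ t = t x / ξ ^ (t + 1)` for some
`ξ ∈ (n, n + 1)`, so this gap exceeds `1` below the turning point `N₀ = (x t) ^ (1 / (t + 1))`
and is at most `1` above it. Hence `⌊x / n ^ t⌋` takes `≈ N₀` distinct values for `n < N₀`, and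
for `n > N₀` it runs through every integer from `⌊x / (N₀ + 1) ^ t⌋ ≈ x / N₀ ^ t = N₀ / t`
down to `0`. The total `N₀ (1 + 1 / t)` is the stated main term.
-/

open Real Set

section Combinatorics

variable {g : ℕ → ℤ}

theorem Icc_subset_image_Icc_of_le_succ_add_one {a b : ℕ} (hab : a ≤ b)
    (hstep : ∀ n ∈ Ico a b, g n ≤ g (n + 1) + 1) :
    Finset.Icc (g b) (g a) ⊆ (Finset.Icc a b).image g := by
  induction b, hab using Nat.le_induction with
  | base => simp
  | succ b hab ih =>
    intro v hv
    rw [Finset.mem_Icc] at hv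
    by_cases hvb : g b ≤ v
    · have hv' : v ∈ (Finset.Icc a b).image g :=
        ih (fun n hn => hstep n ⟨hn.1, hn.2.trans b.lt_succ_self⟩) (Finset.mem_Icc.2 ⟨hvb, hv.2⟩)
      exact Finset.image_subset_image (Finset.Icc_subset_Icc_right b.le_succ) hv'
    · have := hstep b ⟨hab, b.lt_succ_self⟩
      exact Finset.mem_image.2 ⟨b + 1, Finset.mem_Icc.2 ⟨by omega, le_rfl⟩, by omega⟩

variable {M K x : ℕ}

theorem card_image_Icc_le (hanti : AntitoneOn g (Icc 1 x)) (hK : 1 ≤ K) (hKx : K ≤ x) :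
    (((Finset.Icc 1 x).image g).card : ℤ) ≤ K + (g K - g x) := by
  have hsub : (Finset.Icc 1 x).image g ⊆ (Finset.Ico 1 K).image g ∪ Finset.Icc (g x) (g K) := by
    intro v hv
    obtain ⟨n, hn, rfl⟩ := Finset.mem_image.1 hv
    rw [Finset.mem_Icc] at hn
    rcases lt_or_ge n K with hnK | hKn
    · exact Finset.mem_union_left _ (Finset.mem_image_of_mem g (Finset.mem_Ico.2 ⟨hn.1, hnK⟩))
    · exact Finset.mem_union_right _ (Finset.mem_Icc.2
        ⟨hanti hn ⟨by omega, le_rfl⟩ hn.2, hanti ⟨hK, hKx⟩ hn hKn⟩)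
  have hgxK : g x ≤ g K := hanti ⟨hK, hKx⟩ ⟨hK.trans hKx, le_rfl⟩ hKx
  have hcard := (Finset.card_le_card hsub).trans (Finset.card_union_le _ _)
  have hIco := (Finset.card_image_le (s := Finset.Ico 1 K) (f := g)).trans_eq (Nat.card_Ico 1 K)
  rw [Int.card_Icc] at hcard
  omega

theorem le_card_image_Icc (hanti : AntitoneOn g (Icc 1 x)) (hstrict : StrictAntiOn g (Icc 1 M))
    (hK : 1 ≤ K) (hMK : M ≤ K) (hKx : K ≤ x) (hstep : ∀ n ∈ Ico K x, g n ≤ g (n + 1) + 1) :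
    (M : ℤ) + (g K - g x) ≤ ((Finset.Icc 1 x).image g).card := by
  have hdisj : Disjoint ((Finset.Ico 1 M).image g) (Finset.Icc (g x) (g K)) := by
    refine Finset.disjoint_left.2 fun v hv hv' => ?_
    obtain ⟨n, hn, rfl⟩ := Finset.mem_image.1 hv
    rw [Finset.mem_Ico] at hn
    have h1 : g M < g n := hstrict ⟨hn.1, hn.2.le⟩ ⟨by omega, le_rfl⟩ hn.2
    have h2 : g K ≤ g M := hanti ⟨by omega, by omega⟩ ⟨by omega, hKx⟩ hMK
    have := (Finset.mem_Icc.1 hv').2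
    omega
  have hsub : (Finset.Ico 1 M).image g ∪ Finset.Icc (g x) (g K) ⊆ (Finset.Icc 1 x).image g :=
    Finset.union_subset
      (Finset.image_subset_image (Finset.Ico_subset_Icc_self.trans
        (Finset.Icc_subset_Icc_right (hMK.trans hKx))))
      ((Icc_subset_image_Icc_of_le_succ_add_one hKx hstep).trans
        (Finset.image_subset_image (Finset.Icc_subset_Icc_left hK)))
  have hinj : ((Finset.Ico 1 M).image g).card = M - 1 := by
    rw [Finset.card_image_of_injOn (hstrict.injOn.mono fun n hn => ?_), Nat.card_Ico]
    simp only [Finset.coe_Ico, Set.mem_Ico] at hn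
    exact ⟨hn.1, hn.2.le⟩
  have hgxK : g x ≤ g K := hanti ⟨hK, hKx⟩ ⟨hK.trans hKx, le_rfl⟩ hKx
  have := Finset.card_le_card hsub
  rw [Finset.card_union_of_disjoint hdisj, hinj, Int.card_Icc] at this
  omega

end Combinatorics

section Analysis

variable {x t a : ℝ}

theorem exists_div_rpow_sub_div_rpow_add_one (ha : 0 < a) :
    ∃ ξ ∈ Ioo a (a + 1), x / a ^ t - x / (a + 1) ^ t = x * t / ξ ^ (t + 1) := by
  have hderiv : ∀ u ∈ Ioo a (a + 1),
      HasDerivAt (fun u => x * u ^ (-t)) (x * (-t * u ^ (-t - 1))) u := fun u hu =>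
    ((hasDerivAt_rpow_const (Or.inl (ha.trans hu.1).ne')).const_mul x)
  have hcont : ContinuousOn (fun u => x * u ^ (-t)) (Icc a (a + 1)) := fun u hu =>
    ((continuousAt_rpow_const _ _ (Or.inl (ha.trans_le hu.1).ne')).const_mul x).continuousWithinAt
  obtain ⟨ξ, hξ, hslope⟩ := exists_hasDerivAt_eq_slope _ _ (by linarith) hcont hderiv
  refine ⟨ξ, hξ, ?_⟩
  have hξ0 : 0 < ξ := ha.trans hξ.1
  rw [add_sub_cancel_left, div_one, rpow_neg ha.le, rpow_neg (by linarith),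
    show -t - 1 = -(t + 1) by ring, rpow_neg hξ0.le] at hslope
  rw [div_eq_mul_inv, div_eq_mul_inv, div_eq_mul_inv]
  linarith

theorem div_rpow_sub_div_rpow_add_one_le_one (ht : 0 < t) (ha : 0 < a)
    (h : x * t ≤ a ^ (t + 1)) : x / a ^ t - x / (a + 1) ^ t ≤ 1 := by
  obtain ⟨ξ, hξ, heq⟩ := exists_div_rpow_sub_div_rpow_add_one (x := x) (t := t) ha
  rw [heq, div_le_one (by have := ha.trans hξ.1; positivity)]
  exact h.trans (rpow_le_rpow ha.le hξ.1.le (by linarith))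

theorem one_le_div_rpow_sub_div_rpow_add_one (ht : 0 < t) (ha : 0 < a)
    (h : (a + 1) ^ (t + 1) ≤ x * t) : 1 ≤ x / a ^ t - x / (a + 1) ^ t := by
  obtain ⟨ξ, hξ, heq⟩ := exists_div_rpow_sub_div_rpow_add_one (x := x) (t := t) ha
  rw [heq, le_div_iff₀ (by have := ha.trans hξ.1; positivity), one_mul]
  exact (rpow_le_rpow (by linarith [ha.trans hξ.1]) hξ.2.le (by linarith)).trans h

theorem rpow_mul_rpow_neg_add_rpow_eq (hx : 0 ≤ x) (ht : 0 < t) :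
    x ^ (1 / (t + 1)) * (t ^ (-(t / (t + 1))) + t ^ (1 / (t + 1))) =
      (x * t) ^ (1 / (t + 1)) * (1 + t⁻¹) := by
  have h : t ^ (-(t / (t + 1))) = t ^ (1 / (t + 1)) * t⁻¹ := by
    rw [← rpow_neg_one, ← rpow_add ht]
    congr 1
    field_simp
    ring
  rw [h, mul_rpow hx ht.le]
  ring

end Analysis

section FloorQuotient

variable {t : ℝ} {x : ℕ}

theorem antitoneOn_floor_div_rpow (ht : 0 ≤ t) :
    AntitoneOn (fun n : ℕ => ⌊(x : ℝ) / (n : ℝ) ^ t⌋) (Ici 1) := by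
  intro m hm n _ hmn
  have hm0 : (0 : ℝ) < m := by exact_mod_cast hm
  exact Int.floor_le_floor (div_le_div_of_nonneg_left (Nat.cast_nonneg _) (by positivity)
    (rpow_le_rpow hm0.le (by exact_mod_cast hmn) ht))

theorem floor_div_rpow_succ_lt (ht : 0 < t) {n : ℕ} (hn : 0 < n)
    (h : ((n : ℝ) + 1) ^ (t + 1) ≤ x * t) :
    ⌊(x : ℝ) / ((n + 1 : ℕ) : ℝ) ^ t⌋ < ⌊(x : ℝ) / (n : ℝ) ^ t⌋ := by
  have hgap := one_le_div_rpow_sub_div_rpow_add_one ht (by exact_mod_cast hn) h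
  rw [Int.lt_iff_add_one_le, ← Int.floor_add_one, Nat.cast_succ]
  exact Int.floor_le_floor (by linarith)

theorem floor_div_rpow_le_succ_add_one (ht : 0 < t) {n : ℕ} (hn : 0 < n)
    (h : (x : ℝ) * t ≤ (n : ℝ) ^ (t + 1)) :
    ⌊(x : ℝ) / (n : ℝ) ^ t⌋ ≤ ⌊(x : ℝ) / ((n + 1 : ℕ) : ℝ) ^ t⌋ + 1 := by
  have hgap := div_rpow_sub_div_rpow_add_one_le_one ht (by exact_mod_cast hn) h
  rw [← Int.floor_add_one, Nat.cast_succ]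
  exact Int.floor_le_floor (by linarith)

theorem strictAntiOn_floor_div_rpow (ht : 0 < t) {N : ℕ} (hN : (N : ℝ) ^ (t + 1) ≤ x * t) :
    StrictAntiOn (fun n : ℕ => ⌊(x : ℝ) / (n : ℝ) ^ t⌋) (Icc 1 N) := by
  intro m hm n hn hmn
  have hmN : (m : ℝ) + 1 ≤ N := by exact_mod_cast hmn.trans_le hn.2
  calc ⌊(x : ℝ) / (n : ℝ) ^ t⌋ ≤ ⌊(x : ℝ) / ((m + 1 : ℕ) : ℝ) ^ t⌋ :=
        antitoneOn_floor_div_rpow ht.le (show 1 ≤ m + 1 by omega) (show 1 ≤ n from hn.1) hmn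
    _ < ⌊(x : ℝ) / (m : ℝ) ^ t⌋ := floor_div_rpow_succ_lt ht hm.1
        ((rpow_le_rpow (by positivity) hmN (by linarith)).trans hN)

theorem floor_div_rpow_self (ht : 1 < t) (hx : 2 ≤ x) : ⌊(x : ℝ) / (x : ℝ) ^ t⌋ = 0 := by
  have hx1 : (1 : ℝ) < x := by exact_mod_cast hx
  rw [Int.floor_eq_zero_iff]
  refine ⟨by positivity, ?_⟩
  rw [div_lt_one (by positivity)]
  simpa using rpow_lt_rpow_of_exponent_lt hx1 ht

end FloorQuotient

noncomputable def floorQuotients (x : ℕ) (t : ℝ) : Finset ℤ :=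
  (Finset.Icc 1 x).image fun n : ℕ => ⌊(x : ℝ) / (n : ℝ) ^ t⌋

section Counting

variable {t : ℝ} {x : ℕ}

theorem card_floorQuotients_mem_Icc (ht : 1 < t) {N : ℕ} (hN1 : 1 ≤ N) (hNx : N + 1 ≤ x)
    (hN : (N : ℝ) ^ (t + 1) ≤ x * t) (hN' : (x : ℝ) * t ≤ ((N : ℝ) + 1) ^ (t + 1)) :
    ((floorQuotients x t).card : ℤ) ∈
      Icc (N + ⌊(x : ℝ) / ((N + 1 : ℕ) : ℝ) ^ t⌋) (N + 1 + ⌊(x : ℝ) / ((N + 1 : ℕ) : ℝ) ^ t⌋) := by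
  have ht0 : 0 < t := by linarith
  have hanti := (antitoneOn_floor_div_rpow (x := x) ht0.le).mono
    (Icc_subset_Ici_self : Icc 1 x ⊆ Ici 1)
  have hstep (n : ℕ) (hn : n ∈ Ico (N + 1) x) :
      ⌊(x : ℝ) / (n : ℝ) ^ t⌋ ≤ ⌊(x : ℝ) / ((n + 1 : ℕ) : ℝ) ^ t⌋ + 1 := by
    have hNn : (N : ℝ) + 1 ≤ n := by exact_mod_cast hn.1
    exact floor_div_rpow_le_succ_add_one ht0 (by have := hn.1; omega)
      (hN'.trans (rpow_le_rpow (by positivity) hNn (by linarith)))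
  have hlo := le_card_image_Icc hanti (strictAntiOn_floor_div_rpow ht0 hN) (by omega)
    N.le_succ hNx hstep
  have hhi := card_image_Icc_le hanti (by omega) hNx
  rw [floor_div_rpow_self ht (by omega), sub_zero] at hlo hhi
  exact ⟨hlo, hhi⟩

variable {N0 : ℝ}

theorem abs_card_floorQuotients_sub_le_three (ht : 1 < t) (hN0 : N0 ^ (t + 1) = x * t)
    (h1N0 : 1 ≤ N0) (hNx : ⌊N0⌋₊ + 1 ≤ x) :
    |((floorQuotients x t).card : ℝ) - N0 * (1 + t⁻¹)| ≤ 3 := by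
  set N := ⌊N0⌋₊
  have ht0 : 0 < t := by linarith
  have hNN0 : (N : ℝ) ≤ N0 := Nat.floor_le (by linarith)
  have hN0N : N0 < N + 1 := Nat.lt_floor_add_one N0
  obtain ⟨hlo, hhi⟩ := card_floorQuotients_mem_Icc ht (Nat.le_floor (by exact_mod_cast h1N0)) hNx
    ((rpow_le_rpow (by positivity) hNN0 (by linarith)).trans hN0.le)
    (hN0.symm.le.trans (rpow_le_rpow (by linarith) hN0N.le (by linarith)))
  set V := ⌊(x : ℝ) / ((N + 1 : ℕ) : ℝ) ^ t⌋
  have hxN0 : (x : ℝ) / N0 ^ t = N0 * t⁻¹ := by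
    rw [rpow_add (by linarith), rpow_one] at hN0
    field_simp
    linarith
  have hV_le : (V : ℝ) ≤ N0 * t⁻¹ := by
    rw [← hxN0]
    refine (Int.floor_le _).trans (div_le_div_of_nonneg_left (by positivity) (by positivity) ?_)
    exact rpow_le_rpow (by linarith) (by push_cast; linarith) ht0.le
  have hV_ge : N0 * t⁻¹ - 2 ≤ V := by
    have hgap := div_rpow_sub_div_rpow_add_one_le_one (x := x) ht0 (by linarith) hN0.ge
    have hmono : (x : ℝ) / (N0 + 1) ^ t ≤ x / ((N + 1 : ℕ) : ℝ) ^ t :=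
      div_le_div_of_nonneg_left (by positivity) (by positivity)
        (rpow_le_rpow (by positivity) (by push_cast; linarith) ht0.le)
    linarith [Int.sub_one_lt_floor ((x : ℝ) / ((N + 1 : ℕ) : ℝ) ^ t)]
  have hlo' : (N : ℝ) + V ≤ (floorQuotients x t).card := by exact_mod_cast hlo
  have hhi' : ((floorQuotients x t).card : ℝ) ≤ N + 1 + V := by exact_mod_cast hhi
  rw [abs_le]
  constructor <;> linarith

theorem abs_card_floorQuotients_sub_le_of_le (ht : 1 < t) (hN0 : N0 ^ (t + 1) = x * t)
    (h1N0 : 1 ≤ N0) (hxN0 : (x : ℝ) ≤ N0) :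
    |((floorQuotients x t).card : ℝ) - N0 * (1 + t⁻¹)| ≤ t + 1 := by
  have hN0t : N0 ≤ t := by
    have hpow : N0 ^ t ≤ t := by
      rw [rpow_add (by linarith), rpow_one] at hN0
      nlinarith
    exact (by simpa using rpow_le_rpow_of_exponent_le h1N0 ht.le : N0 ≤ N0 ^ t).trans hpow
  have hcard : ((floorQuotients x t).card : ℝ) ≤ x := by
    exact_mod_cast Finset.card_image_le.trans (by simp)
  have hN0_div_t : N0 * t⁻¹ ≤ 1 := by
    rw [← div_eq_mul_inv, div_le_one (by linarith)]
    exact hN0t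
  have hT0 : 0 ≤ N0 * (1 + t⁻¹) := by positivity
  rw [abs_le, mul_add, mul_one]
  constructor <;> linarith [Nat.cast_nonneg (α := ℝ) (floorQuotients x t).card]

end Counting

theorem stmt_1 (t : ℝ) (ht : 1 < t) :
    ∃ C : ℝ, ∀ x : ℕ, 1 ≤ x →
      |(((Finset.Icc 1 x).image (fun n : ℕ => ⌊(x : ℝ) / (n : ℝ) ^ t⌋)).card : ℝ)
        - (x : ℝ) ^ (1 / (t + 1)) * (t ^ (-(t / (t + 1))) + t ^ (1 / (t + 1)))| ≤ C := by
  refine ⟨t + 3, fun x hx => ?_⟩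
  have ht1 : 0 < t + 1 := by linarith
  change |((floorQuotients x t).card : ℝ) - _| ≤ _
  rw [rpow_mul_rpow_neg_add_rpow_eq (Nat.cast_nonneg x) (by linarith)]
  set N0 := ((x : ℝ) * t) ^ (1 / (t + 1))
  have hN0 : N0 ^ (t + 1) = x * t := by
    rw [← rpow_mul (by positivity), one_div_mul_cancel ht1.ne', rpow_one]
  have h1N0 : 1 ≤ N0 :=
    one_le_rpow (one_le_mul_of_one_le_of_one_le (by exact_mod_cast hx) ht.le) (by positivity)
  by_cases hNx : ⌊N0⌋₊ + 1 ≤ x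
  · linarith [abs_card_floorQuotients_sub_le_three ht hN0 h1N0 hNx]
  · have hxN0 : (x : ℝ) ≤ N0 :=
      (Nat.cast_le.2 (by omega : x ≤ ⌊N0⌋₊)).trans (Nat.floor_le (by linarith))
    linarith [abs_card_floorQuotients_sub_le_of_le ht hN0 h1N0 hxN0]
end

section
/- Let t > 1 and a = (xt)^(1/(t+1)). For distinct positive integers m, n ≤ a, the values ⌊x/m^t⌋ and ⌊x/n^t⌋ are distinct; hence the number of elements of {⌊x/n^t⌋ : 1 ≤ n ≤ x} that are ≥ x/a^t is (tx)^(1/(t+1)) + O(1). -/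
/-!
Put `a = (x t)^(1/(t+1))`, so that `a^(t+1) = x t`. By Bernoulli's inequality
`(n/m)^t ≥ 1 + t (n - m)/m`, hence `x/m^t - x/n^t ≥ (x/n^t) · t (n - m)/m`, and for `n ≤ a` we have
`x/n^t ≥ n/t`. So whenever `0 < m`, `m + 1 ≤ n ≤ a`, the gap `x/m^t - x/n^t` is at least
`n/m > 1`, and the floors `⌊x/n^t⌋` strictly decrease for `1 ≤ n ≤ a`.

For the count, every `n > a` gives `⌊x/n^t⌋ < x/a^t`, so at most `⌊a⌋` values pass the threshold;
conversely every `1 ≤ n ≤ a - 1` passes it (apply the gap to `a - 1` and `a`), and these `⌊a - 1⌋`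
values are distinct. Hence the count lies in `[a - 2, a]`.
-/

open Finset

lemma Int.floor_lt_floor_of_add_one_le {R : Type*} [Ring R] [LinearOrder R] [FloorRing R]
    [IsOrderedRing R] {y z : R} (h : y + 1 ≤ z) : ⌊y⌋ < ⌊z⌋ := by
  have := Int.floor_mono h
  rw [Int.floor_add_one] at this
  omega

section

variable {t x : ℝ}

lemma div_rpow_mul_le_div_rpow_sub (ht : 1 ≤ t) (hx : 0 ≤ x) {m n : ℝ} (hm : 0 < m)
    (hmn : m ≤ n) : x / n ^ t * (t * ((n - m) / m)) ≤ x / m ^ t - x / n ^ t := by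
  have hn : 0 < n := hm.trans_le hmn
  have bernoulli : 1 + t * ((n - m) / m) ≤ n ^ t / m ^ t := by
    have h := one_add_mul_self_le_rpow_one_add
      (by have := div_nonneg (sub_nonneg.2 hmn) hm.le; linarith : -1 ≤ (n - m) / m) ht
    rwa [show 1 + (n - m) / m = n / m by field_simp; ring, Real.div_rpow hn.le hm.le] at h
  have hsplit : x / m ^ t - x / n ^ t = x / n ^ t * (n ^ t / m ^ t - 1) := by
    have : 0 < n ^ t := by positivity
    have : 0 < m ^ t := by positivity
    field_simp
  rw [hsplit]
  exact mul_le_mul_of_nonneg_left (by linarith) (by positivity)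

lemma div_le_div_rpow_of_rpow_add_one_le (ht : 0 < t) {n : ℝ} (hn : 0 < n)
    (hnx : n ^ (t + 1) ≤ x * t) : n / t ≤ x / n ^ t := by
  rw [div_le_div_iff₀ ht (by positivity), mul_comm n, ← Real.rpow_add_one hn.ne']
  exact hnx

lemma div_rpow_add_one_lt_div_rpow (ht : 1 ≤ t) {m n : ℝ} (hm : 0 < m) (hmn : m + 1 ≤ n)
    (hnx : n ^ (t + 1) ≤ x * t) : x / n ^ t + 1 < x / m ^ t := by
  have ht0 : 0 < t := by linarith
  have hn : 0 < n := by linarith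
  have hx : 0 ≤ x := by
    have : 0 < x * t := (by positivity : 0 < n ^ (t + 1)).trans_le hnx
    exact (pos_of_mul_pos_left this ht0.le).le
  suffices 1 < x / m ^ t - x / n ^ t by linarith
  have hnm : 0 ≤ t * ((n - m) / m) := mul_nonneg ht0.le (div_nonneg (by linarith) hm.le)
  calc 1 < n / m := by rw [one_lt_div hm]; linarith
    _ ≤ n / m * (n - m) := le_mul_of_one_le_right (by positivity) (by linarith)
    _ = n / t * (t * ((n - m) / m)) := by field_simp
    _ ≤ x / n ^ t * (t * ((n - m) / m)) :=
      mul_le_mul_of_nonneg_right (div_le_div_rpow_of_rpow_add_one_le ht0 hn hnx) hnm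
    _ ≤ x / m ^ t - x / n ^ t := div_rpow_mul_le_div_rpow_sub ht hx hm (by linarith)

variable {a : ℝ}

lemma floor_div_rpow_strictAntiOn (ht : 1 ≤ t) (ha : a ^ (t + 1) = x * t) :
    StrictAntiOn (fun n : ℕ => ⌊x / (n : ℝ) ^ t⌋) {n | 1 ≤ n ∧ (n : ℝ) ≤ a} := by
  rintro m ⟨hm, -⟩ n ⟨-, hna⟩ hmn
  apply Int.floor_lt_floor_of_add_one_le
  refine (div_rpow_add_one_lt_div_rpow ht (by exact_mod_cast hm) (by exact_mod_cast hmn) ?_).le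
  rw [← ha]
  exact Real.rpow_le_rpow (by positivity) hna (by linarith)

noncomputable abbrev largeFloorValues (t x a : ℝ) (N : ℕ) : Finset ℤ :=
  ((Icc 1 N).image fun n : ℕ => ⌊x / (n : ℝ) ^ t⌋).filter fun k : ℤ => x / a ^ t ≤ (k : ℝ)

lemma card_largeFloorValues_le (ht : 0 < t) (hx : 0 < x) (ha : 0 < a) (N : ℕ) :
    ((largeFloorValues t x a N).card : ℝ) ≤ a := by
  have hsub : largeFloorValues t x a N ⊆ (Icc 1 ⌊a⌋₊).image fun n : ℕ => ⌊x / (n : ℝ) ^ t⌋ := by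
    simp only [subset_iff, mem_filter, mem_image, mem_Icc]
    rintro k ⟨⟨n, ⟨hn1, -⟩, rfl⟩, hk⟩
    refine ⟨n, ⟨hn1, ?_⟩, rfl⟩
    by_contra! hlt
    have hna : a < n := (Nat.floor_lt ha.le).1 hlt
    have : x / (n : ℝ) ^ t < x / a ^ t := by gcongr
    linarith [Int.floor_le (x / (n : ℝ) ^ t)]
  calc ((largeFloorValues t x a N).card : ℝ)
      ≤ ((Icc 1 ⌊a⌋₊).card : ℝ) := by exact_mod_cast (card_le_card hsub).trans card_image_le
    _ = ⌊a⌋₊ := by simp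
    _ ≤ a := Nat.floor_le ha.le

lemma floor_sub_one_le_card_largeFloorValues (ht : 1 ≤ t) (hx : 0 ≤ x)
    (ha : a ^ (t + 1) = x * t) {N : ℕ} (haN : a - 1 ≤ N) : ⌊a - 1⌋₊ ≤ (largeFloorValues t x a N).card := by
  have hbound : ∀ n ∈ Icc 1 ⌊a - 1⌋₊, 1 ≤ n ∧ (n : ℝ) ≤ a - 1 := by
    intro n hn
    rw [mem_Icc] at hn
    exact ⟨hn.1, (Nat.le_floor_iff' (by omega)).1 hn.2⟩
  have hmaps : Set.MapsTo (fun n : ℕ => ⌊x / (n : ℝ) ^ t⌋) (Icc 1 ⌊a - 1⌋₊)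
      (largeFloorValues t x a N) := by
    intro n hn
    obtain ⟨hn1, hna⟩ := hbound n hn
    have hn1' : (1 : ℝ) ≤ n := by exact_mod_cast hn1
    have hgap :=
      div_rpow_add_one_lt_div_rpow ht (by linarith : 0 < a - 1) (sub_add_cancel a 1).le ha.le
    have : x / (a - 1) ^ t ≤ x / (n : ℝ) ^ t := by gcongr
    refine mem_filter.2 ⟨mem_image_of_mem _ ?_, ?_⟩
    · exact mem_Icc.2 ⟨hn1, by exact_mod_cast hna.trans haN⟩
    · linarith [Int.sub_one_lt_floor (x / (n : ℝ) ^ t)]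
  have hinj : Set.InjOn (fun n : ℕ => ⌊x / (n : ℝ) ^ t⌋) (Icc 1 ⌊a - 1⌋₊) :=
    (floor_div_rpow_strictAntiOn ht ha).injOn.mono fun n hn =>
      show 1 ≤ n ∧ (n : ℝ) ≤ a from ⟨(hbound n hn).1, by linarith [(hbound n hn).2]⟩
  simpa using card_le_card_of_injOn _ hmaps hinj

end

lemma lt_add_one_of_rpow_add_one_eq {t x a : ℝ} (ht : 0 ≤ t) (hx : 0 ≤ x)
    (hax : a ^ (t + 1) = x * t) : a < x + 1 := by
  by_contra! hle
  have bernoulli := one_add_mul_self_le_rpow_one_add (by linarith : -1 ≤ x)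
    (by linarith : 1 ≤ t + 1)
  have := Real.rpow_le_rpow (by positivity) hle (by linarith : 0 ≤ t + 1)
  rw [hax, add_comm x] at this
  nlinarith

open Classical in
theorem stmt_3 (t : ℝ) (ht : 1 < t) :
    (∀ x : ℝ, 0 < x → ∀ m n : ℕ, 1 ≤ m → 1 ≤ n →
        (m : ℝ) ≤ (x * t) ^ (1 / (t + 1)) → (n : ℝ) ≤ (x * t) ^ (1 / (t + 1)) → m ≠ n →
        ⌊x / (m : ℝ) ^ t⌋ ≠ ⌊x / (n : ℝ) ^ t⌋) ∧
    (∃ C : ℝ, ∀ x : ℕ, 1 ≤ x →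
      |(((((Finset.Icc 1 x).image (fun n : ℕ => ⌊(x : ℝ) / (n : ℝ) ^ t⌋)).filter
            (fun k : ℤ => (x : ℝ) / (((x : ℝ) * t) ^ (1 / (t + 1))) ^ t ≤ (k : ℝ))).card : ℝ))
        - (t * (x : ℝ)) ^ (1 / (t + 1))| ≤ C) := by
  have ha : ∀ x : ℝ, 0 ≤ x → ((x * t) ^ (1 / (t + 1))) ^ (t + 1) = x * t := fun x hx => by
    rw [one_div, Real.rpow_inv_rpow (by positivity) (by positivity)]
  refine ⟨fun x hx m n hm hn hma hna hmn h =>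
    hmn ((floor_div_rpow_strictAntiOn ht.le (ha x hx.le)).injOn ⟨hm, hma⟩ ⟨hn, hna⟩ h), 2, ?_⟩
  intro x hx
  have hx0 : (0 : ℝ) < x := by exact_mod_cast hx
  have ha0 : 0 < ((x : ℝ) * t) ^ (1 / (t + 1)) := by positivity
  have hupper := card_largeFloorValues_le (t := t) (by linarith) hx0 ha0 x
  have hlower : (⌊((x : ℝ) * t) ^ (1 / (t + 1)) - 1⌋₊ : ℝ) ≤ _ := Nat.cast_le.2 <|
    floor_sub_one_le_card_largeFloorValues ht.le hx0.le (ha x hx0.le) (N := x)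
      (by linarith [lt_add_one_of_rpow_add_one_eq (by linarith) hx0.le (ha x hx0.le)])
  rw [mul_comm t, abs_le]
  constructor <;> linarith [Nat.sub_one_lt_floor (((x : ℝ) * t) ^ (1 / (t + 1)) - 1)]
end

section
/- Let β > 1 be fixed. Then for all real x ≥ 5, the sum over primes p > x of 1/p^β is strictly less than (2β/(β-1)) · 1/(x^(β-1) · log x). -/
/-!
For `p > x` we have `p ^ (-β) ≤ log p * p ^ (-β) / log x`, so it suffices to bound
`∑_{p > x} log p * p ^ (-β)`. Writing `p ^ (-β)` as a telescoping sum of the differences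
`m ^ (-β) - (m + 1) ^ (-β)` over `m ≥ p` and exchanging the sums (Abel summation), the partial
sums `∑_{p ≤ m} log p = θ m ≤ m log 4` (Chebyshev) reduce this to
`log 4 * ∑_{m ≥ N} m (m ^ (-β) - (m + 1) ^ (-β))` with `N = ⌈x⌉`. By convexity of `t ↦ t ^ (1 - β)`
each summand is at most `β / (β - 1) * (m ^ (1 - β) - (m + 1) ^ (1 - β))`, which telescopes to
`β / (β - 1) * N ^ (1 - β) ≤ β / (β - 1) * x ^ (1 - β)`. The constant `2` comes from `log 4 < 2`.
-/

open Finset Real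

lemma sub_one_mul_mul_rpow_neg_le_rpow_sub_rpow {β a b : ℝ} (hβ : 1 ≤ β) (ha : 0 < a)
    (hab : a ≤ b) : (β - 1) * (b - a) * b ^ (-β) ≤ a ^ (1 - β) - b ^ (1 - β) := by
  have hb : 0 < b := ha.trans_le hab
  have hratio : 1 + (β - 1) * (1 - a / b) ≤ (a / b) ^ (1 - β) := by
    -- `exp y ≥ 1 + y` with `y = (1 - β) log (a / b)`, then `log (a / b) ≤ a / b - 1`
    rw [rpow_def_of_pos (div_pos ha hb)]
    have := add_one_le_exp (log (a / b) * (1 - β))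
    have := log_le_sub_one_of_pos (div_pos ha hb)
    nlinarith
  calc (β - 1) * (b - a) * b ^ (-β)
      = b ^ (1 - β) * (1 + (β - 1) * (1 - a / b)) - b ^ (1 - β) := by
        rw [sub_eq_add_neg 1 β, rpow_add hb, rpow_one]
        field_simp
        ring
    _ ≤ b ^ (1 - β) * (a / b) ^ (1 - β) - b ^ (1 - β) := by gcongr
    _ = a ^ (1 - β) - b ^ (1 - β) := by
        rw [div_rpow ha.le hb.le, mul_div_cancel₀ _ (rpow_pos_of_pos hb _).ne']

lemma mul_rpow_neg_sub_rpow_neg_le {β m : ℝ} (hβ : 1 < β) (hm : 0 < m) :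
    m * (m ^ (-β) - (m + 1) ^ (-β)) ≤ β / (β - 1) * (m ^ (1 - β) - (m + 1) ^ (1 - β)) := by
  have hβ1 : 0 < β - 1 := by linarith
  have tangent :=
    sub_one_mul_mul_rpow_neg_le_rpow_sub_rpow hβ.le hm (le_add_of_nonneg_right zero_le_one)
  have hpow : ∀ t : ℝ, 0 < t → t ^ (1 - β) = t * t ^ (-β) := fun t ht => by
    rw [sub_eq_add_neg 1 β, rpow_add ht, rpow_one]
  rw [hpow m hm, hpow (m + 1) (by linarith)] at tangent ⊢
  rw [div_mul_eq_mul_div, le_div_iff₀ hβ1]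
  nlinarith

lemma sum_Ico_sub_succ {G : Type*} [AddCommGroup G] (f : ℕ → G) {m n : ℕ} (hmn : m ≤ n) :
    ∑ i ∈ Ico m n, (f i - f (i + 1)) = f m - f n := by
  rw [← neg_sub (f n), ← sum_Ico_sub f hmn, ← sum_neg_distrib]
  simp only [neg_sub]

lemma sum_mul_eq_sum_Ico_sub_mul_add {R : Type*} [CommRing R] (a h : ℕ → R) {s : Finset ℕ}
    {N M : ℕ} (hs : ∀ n ∈ s, N ≤ n ∧ n < M) :
    ∑ n ∈ s, a n * h n =
      ∑ m ∈ Ico N M, (h m - h (m + 1)) * ∑ n ∈ s with n ≤ m, a n + h M * ∑ n ∈ s, a n := by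
  have telescope : ∀ n ∈ s, h n = ∑ m ∈ Ico n M, (h m - h (m + 1)) + h M := fun n hn => by
    rw [sum_Ico_sub_succ h (hs n hn).2.le, sub_add_cancel]
  calc ∑ n ∈ s, a n * h n
      = ∑ n ∈ s, (∑ m ∈ Ico n M, a n * (h m - h (m + 1)) + a n * h M) :=
        sum_congr rfl fun n hn => by rw [telescope n hn, mul_add, mul_sum]
    _ = ∑ m ∈ Ico N M, ∑ n ∈ s with n ≤ m, a n * (h m - h (m + 1)) + ∑ n ∈ s, a n * h M := by
        rw [sum_add_distrib, sum_comm' fun n m => ?_]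
        simp only [mem_Ico, mem_filter]
        constructor
        · rintro ⟨hn, hnm, hmM⟩
          exact ⟨⟨hn, hnm⟩, (hs n hn).1.trans hnm, hmM⟩
        · rintro ⟨⟨hn, hnm⟩, -, hmM⟩
          exact ⟨hn, hnm, hmM⟩
    _ = _ := by simp only [mul_sum, mul_comm]

lemma sum_mul_rpow_neg_le {β C : ℝ} (hβ : 1 < β) (hC : 0 ≤ C) (a : ℕ → ℝ) {N : ℕ} (hN : 0 < N)
    {s : Finset ℕ} (hs : ∀ n ∈ s, N ≤ n)
    (hA : ∀ m, N ≤ m → ∑ n ∈ s with n ≤ m, a n ≤ C * m) :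
    ∑ n ∈ s, a n * (n : ℝ) ^ (-β) ≤ C * (β / (β - 1)) * (N : ℝ) ^ (1 - β) := by
  set h : ℕ → ℝ := fun m => (m : ℝ) ^ (-β) with h_def
  set g : ℕ → ℝ := fun m => (m : ℝ) ^ (1 - β) with g_def
  obtain ⟨K, hsK⟩ := s.exists_nat_subset_range
  set M := max N K
  have hNM : N ≤ M := le_max_left N K
  have hsM : ∀ n ∈ s, N ≤ n ∧ n < M :=
    fun n hn => ⟨hs n hn, (mem_range.mp (hsK hn)).trans_le (le_max_right N K)⟩
  have h_anti : ∀ m, 0 < m → 0 ≤ h m - h (m + 1) := fun m hm => by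
    simp only [h_def, sub_nonneg, Nat.cast_succ]
    exact rpow_le_rpow_of_nonpos (by positivity) (by linarith) (by linarith)
  have hMg : (M : ℝ) * h M = g M := by
    simp only [h_def, g_def, sub_eq_add_neg 1 β, rpow_add (by positivity : (0 : ℝ) < M), rpow_one]
  have h_tele : ∑ m ∈ Ico N M, (m : ℝ) * (h m - h (m + 1)) ≤ β / (β - 1) * (g N - g M) := by
    rw [← sum_Ico_sub_succ g hNM, mul_sum]
    refine sum_le_sum fun m hm => ?_
    have hm0 : (0 : ℝ) < m := by exact_mod_cast hN.trans_le (mem_Ico.mp hm).1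
    simpa only [h_def, g_def, Nat.cast_succ] using mul_rpow_neg_sub_rpow_neg_le hβ hm0
  have h_total : ∑ n ∈ s, a n = ∑ n ∈ s with n ≤ M, a n :=
    (sum_filter_of_ne fun n hn _ => (hsM n hn).2.le).symm
  rw [sum_mul_eq_sum_Ico_sub_mul_add a h hsM]
  calc ∑ m ∈ Ico N M, (h m - h (m + 1)) * ∑ n ∈ s with n ≤ m, a n + h M * ∑ n ∈ s, a n
      ≤ ∑ m ∈ Ico N M, (h m - h (m + 1)) * (C * m) + h M * (C * M) := by
        rw [h_total]
        gcongr with m hm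
        · exact h_anti m (hN.trans_le (mem_Ico.mp hm).1)
        · exact hA m (mem_Ico.mp hm).1
        · exact hA M hNM
    _ = C * (∑ m ∈ Ico N M, (m : ℝ) * (h m - h (m + 1)) + g M) := by
        rw [← hMg, mul_add, mul_sum]
        congr 1
        · exact sum_congr rfl fun m _ => by ring
        · ring
    _ ≤ C * (β / (β - 1) * (g N - g M) + g M) := by gcongr
    _ ≤ C * (β / (β - 1)) * g N := by
        have hk : 1 ≤ β / (β - 1) := by rw [one_le_div (by linarith)]; linarith
        have hgM : 0 ≤ g M := by positivity
        nlinarith [mul_nonneg hC (mul_nonneg (sub_nonneg.2 hk) hgM)]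

lemma sum_log_prime_le {s : Finset ℕ} (hs : ∀ p ∈ s, p.Prime) (m : ℕ) :
    ∑ p ∈ s with p ≤ m, log p ≤ log 4 * m := by
  calc ∑ p ∈ s with p ≤ m, log p ≤ ∑ p ∈ m.primesLE, log p := by
        refine sum_le_sum_of_subset_of_nonneg (fun p hp => ?_) fun p _ _ => log_natCast_nonneg p
        rw [mem_filter] at hp
        exact Nat.mem_primesLE.mpr ⟨hp.2, hs p hp.1⟩
    _ = Chebyshev.theta m := (Chebyshev.theta_eq_sum_primesLE_log m).symm
    _ ≤ log 4 * m := Chebyshev.theta_le_log4_mul_x m.cast_nonneg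

lemma sum_one_div_prime_rpow_le {β x : ℝ} (hβ : 1 < β) (hx : 1 < x) {s : Finset ℕ}
    (hs : ∀ p ∈ s, p.Prime ∧ x < p) :
    ∑ p ∈ s, 1 / (p : ℝ) ^ β ≤ log 4 * (β / (β - 1)) * x ^ (1 - β) / log x := by
  have hx0 : 0 < x := by linarith
  have hlogx : 0 < log x := log_pos hx
  have hN : 0 < ⌈x⌉₊ := Nat.ceil_pos.mpr hx0
  calc ∑ p ∈ s, 1 / (p : ℝ) ^ β ≤ ∑ p ∈ s, log p * (p : ℝ) ^ (-β) / log x := by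
        refine sum_le_sum fun p hp => ?_
        have hxp : x < p := (hs p hp).2
        rw [le_div_iff₀ hlogx, rpow_neg (by positivity), ← one_div, mul_comm]
        gcongr
    _ = (∑ p ∈ s, log p * (p : ℝ) ^ (-β)) / log x := (sum_div ..).symm
    _ ≤ log 4 * (β / (β - 1)) * (⌈x⌉₊ : ℝ) ^ (1 - β) / log x := by
        gcongr
        refine sum_mul_rpow_neg_le hβ (log_nonneg (by norm_num)) _ hN (fun p hp => ?_)
          fun m _ => sum_log_prime_le (fun p hp => (hs p hp).1) m
        exact Nat.ceil_le.mpr (hs p hp).2.le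
    _ ≤ log 4 * (β / (β - 1)) * x ^ (1 - β) / log x := by
        have hk : 0 < β / (β - 1) := div_pos (by linarith) (by linarith)
        have hceil : (⌈x⌉₊ : ℝ) ^ (1 - β) ≤ x ^ (1 - β) :=
          rpow_le_rpow_of_nonpos hx0 (Nat.le_ceil x) (by linarith)
        gcongr

open Classical in
theorem stmt_5 (β : ℝ) (hβ : 1 < β) :
    ∀ x : ℝ, 5 ≤ x →
      (∑' p : ℕ, if p.Prime ∧ x < (p : ℝ) then 1 / (p : ℝ) ^ β else 0)
        < (2 * β / (β - 1)) * (1 / (x ^ (β - 1) * Real.log x)) := by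
  intro x hx
  have hx0 : 0 < x := by linarith
  have hlogx : 0 < log x := log_pos (by linarith)
  have hlog4 : log 4 < 2 := by
    rw [show (4 : ℝ) = 2 ^ 2 by norm_num, log_pow]
    push_cast
    linarith [log_two_lt_d9]
  calc (∑' p : ℕ, if p.Prime ∧ x < (p : ℝ) then 1 / (p : ℝ) ^ β else 0)
      ≤ log 4 * (β / (β - 1)) * x ^ (1 - β) / log x := by
        refine tsum_le_of_sum_le' (by positivity) fun u => ?_
        rw [← sum_filter]
        exact sum_one_div_prime_rpow_le hβ (by linarith) fun p hp => (mem_filter.mp hp).2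
    _ < 2 * (β / (β - 1)) * x ^ (1 - β) / log x := by gcongr
    _ = (2 * β / (β - 1)) * (1 / (x ^ (β - 1) * Real.log x)) := by
        rw [← neg_sub β 1, rpow_neg hx0.le]
        field_simp
end

section
/- For all real X with |X| ≤ 1/2 and every positive integer K and nonnegative integer N: |(1−X)^(−K) − Σ_{k=0}^{N} C(K+k−1, k) X^k| ≤ 2^K · C(K+N, N+1) · |X|^(N+1). -/
/-! The tail of the binomial series `(1 - X)⁻ᴷ = ∑ₙ C(n + K - 1, K - 1) Xⁿ` beyond degree `N` is
`X^(N+1) ∑ᵢ C(i + N + K, K - 1) Xⁱ`. Since `C(m + n + k, k) ≤ C(m + k, k) C(n + k, k)`, its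
coefficients are at most `C(N + K, K - 1)` times those of the full series, so the tail is at most
`C(K + N, N + 1) |X|^(N+1) (1 - |X|)⁻ᴷ ≤ 2ᴷ C(K + N, N + 1) |X|^(N+1)`. -/

open Finset

theorem Nat.choose_add_add_le_mul (m n k : ℕ) :
    (m + n + k).choose k ≤ (m + k).choose k * (n + k).choose k := by
  induction k with
  | zero => simp
  | succ k ih =>
    have hmn := Nat.add_one_mul_choose_eq (m + n + k) k
    have hm := Nat.add_one_mul_choose_eq (m + k) k
    have hn := Nat.add_one_mul_choose_eq (n + k) k
    have hlin : (k + 1) * (m + n + k + 1) ≤ (m + k + 1) * (n + k + 1) := by nlinarith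
    show (m + n + k + 1).choose (k + 1) ≤ (m + k + 1).choose (k + 1) * (n + k + 1).choose (k + 1)
    refine Nat.le_of_mul_le_mul_right ?_ (Nat.mul_pos k.succ_pos k.succ_pos)
    calc (m + n + k + 1).choose (k + 1) * ((k + 1) * (k + 1))
        = (k + 1) * ((m + n + k + 1) * (m + n + k).choose k) := by rw [hmn]; ring
      _ ≤ (k + 1) * ((m + n + k + 1) * ((m + k).choose k * (n + k).choose k)) := by gcongr
      _ = (k + 1) * (m + n + k + 1) * ((m + k).choose k * (n + k).choose k) := by ring
      _ ≤ (m + k + 1) * (n + k + 1) * ((m + k).choose k * (n + k).choose k) := by gcongr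
      _ = ((m + k + 1) * (m + k).choose k) * ((n + k + 1) * (n + k).choose k) := by ring
      _ = (m + k + 1).choose (k + 1) * (n + k + 1).choose (k + 1) * ((k + 1) * (k + 1)) := by
        rw [hm, hn]; ring

theorem norm_one_div_one_sub_pow_sub_sum_choose_mul_geometric_le {𝕜 : Type*}
    [NormedDivisionRing 𝕜] (k N : ℕ) {r : 𝕜} (hr : ‖r‖ < 1) :
    ‖1 / (1 - r) ^ (k + 1) - ∑ n ∈ range (N + 1), ((n + k).choose k : 𝕜) * r ^ n‖
      ≤ (N + 1 + k).choose k * ‖r‖ ^ (N + 1) / (1 - ‖r‖) ^ (k + 1) := by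
  have hnorm : ‖‖r‖‖ < 1 := by rwa [norm_norm]
  have hseries := hasSum_choose_mul_geometric_of_norm_lt_one k hr
  rw [← hseries.tsum_eq, ← hseries.summable.sum_add_tsum_nat_add (N + 1), add_sub_cancel_left,
    div_eq_mul_one_div]
  refine tsum_of_norm_bounded
    ((hasSum_choose_mul_geometric_of_norm_lt_one k hnorm).mul_left _) fun i ↦ ?_
  have hcoef : ((i + (N + 1) + k).choose k : ℝ) ≤ (N + 1 + k).choose k * (i + k).choose k := by
    rw [mul_comm]; exact_mod_cast Nat.choose_add_add_le_mul i (N + 1) k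
  have hcast : ‖((i + (N + 1) + k).choose k : 𝕜)‖ ≤ (i + (N + 1) + k).choose k := by
    simpa using Nat.norm_cast_le (α := 𝕜) ((i + (N + 1) + k).choose k)
  calc ‖((i + (N + 1) + k).choose k : 𝕜) * r ^ (i + (N + 1))‖
      ≤ (i + (N + 1) + k).choose k * ‖r‖ ^ (i + (N + 1)) := by
        rw [norm_mul, norm_pow]; gcongr
    _ ≤ (N + 1 + k).choose k * (i + k).choose k * ‖r‖ ^ (i + (N + 1)) := by gcongr
    _ = (N + 1 + k).choose k * ‖r‖ ^ (N + 1) * ((i + k).choose k * ‖r‖ ^ i) := by ring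

theorem stmt_14 (X : ℝ) (hX : |X| ≤ 1 / 2) (K : ℕ) (hK : 1 ≤ K) (N : ℕ) :
    |(1 - X) ^ (-(K : ℤ))
        - ∑ k ∈ Finset.range (N + 1), ((K + k - 1).choose k : ℝ) * X ^ k|
      ≤ 2 ^ K * ((K + N).choose (N + 1) : ℝ) * |X| ^ (N + 1) := by
  obtain ⟨K, rfl⟩ : ∃ K', K = K' + 1 := ⟨K - 1, by omega⟩
  have hpow : (1 - X) ^ (-((K + 1 : ℕ) : ℤ)) = 1 / (1 - X) ^ (K + 1) := by
    rw [zpow_neg, zpow_natCast, one_div]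
  have hcoef (k : ℕ) : (K + 1 + k - 1).choose k = (k + K).choose K := by
    rw [show K + 1 + k - 1 = k + K by omega, Nat.choose_symm_add]
  have hC : (K + 1 + N).choose (N + 1) = (N + 1 + K).choose K := by
    rw [show K + 1 + N = N + 1 + K by omega, Nat.choose_symm_add]
  have hpos : 0 < 1 - |X| := by linarith
  have hinv : (1 - |X|)⁻¹ ≤ 2 := by
    rw [inv_le_comm₀ hpos two_pos]; linarith
  simp only [hpow, hcoef, hC, ← Real.norm_eq_abs]
  calc _ ≤ (N + 1 + K).choose K * ‖X‖ ^ (N + 1) / (1 - ‖X‖) ^ (K + 1) :=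
        norm_one_div_one_sub_pow_sub_sum_choose_mul_geometric_le K N
          (by rw [Real.norm_eq_abs]; linarith)
    _ = (N + 1 + K).choose K * ‖X‖ ^ (N + 1) * (1 - |X|)⁻¹ ^ (K + 1) := by
        rw [inv_pow, div_eq_mul_inv, Real.norm_eq_abs]
    _ ≤ (N + 1 + K).choose K * ‖X‖ ^ (N + 1) * 2 ^ (K + 1) := by gcongr
    _ = _ := by ring
end
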